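/- (Transitivity, path version) Let f : {0,1}^n → {0,1} be a Boolean function, let t ≥ 1, and let i, j_1, …, j_t ∈ [n] be pairwise distinct indices. Suppose there are bits b_0, b_1, …, b_{t−1} ∈ {0,1} such that j_1 ∈ U(f_{i b_0}) and j_{s+1} ∈ U(f_{j_s b_s}) for every 1 ≤ s ≤ t−1. Then {j_1, …, j_t} ⊆ U(f_{i b_0}). -/

import Mathlib

/-- `f` depends on variable `i`: flipping the `i`-th coordinate of some input changes the value. -/
def BoolDependsOn {ι : Type*} [DecidableEq ι] (f : (ι → Bool) → Bool) (i : ι) : Prop :=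
  ∃ a : ι → Bool, f (Function.update a i (!a i)) ≠ f a

/-- The restriction `f|_{x_j = b}`, a Boolean function on the remaining variables. -/
def restrictBit {ι : Type*} [DecidableEq ι] (f : (ι → Bool) → Bool) (j : ι) (b : Bool) :
    ({i : ι // i ≠ j} → Bool) → Bool :=
  fun y => f (fun i => if h : i = j then b else y ⟨i, h⟩)

/-- `k ∈ U(f_{jb})`: variable `k` (a variable of `f_{jb}`, i.e. `k ≠ j`) is useless for the
restriction `f_{jb}`. -/
def UselessIn {ι : Type*} [DecidableEq ι] (f : (ι → Bool) → Bool) (j : ι) (b : Bool)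
    (k : ι) : Prop :=
  ∃ h : k ≠ j, ¬ BoolDependsOn (restrictBit f j b) ⟨k, h⟩

/-!
If `k` is useless in `f_{i b}` and `m` is useless in `f_{k c}`, then on an input with `x_i = b`
the coordinate `x_m` can be changed freely: first set `x_k := c` (harmless, since `x_i = b`),
then change `x_m` (harmless, since now `x_k = c`), then restore `x_k` (harmless, since still
`x_i = b`). Induction along the path `i, j 0, j 1, …` gives the theorem.
-/

open Function

variable {ι : Type*} [DecidableEq ι]

theorem not_boolDependsOn_iff {f : (ι → Bool) → Bool} {i : ι} :
    ¬ BoolDependsOn f i ↔ ∀ a v, f (update a i v) = f a := by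
  simp only [BoolDependsOn, not_exists, not_not]
  refine ⟨fun h a v => ?_, fun h a => h a _⟩
  by_cases hv : v = a i
  · rw [hv, update_eq_self]
  · rw [Bool.eq_not_iff.2 hv]
    exact h a

theorem restrictBit_apply_comp_val (f : (ι → Bool) → Bool) {j : ι} {b : Bool} {a : ι → Bool}
    (ha : a j = b) : restrictBit f j b (a ∘ Subtype.val) = f a := by
  refine congrArg f (funext fun i => ?_)
  by_cases hij : i = j
  · subst hij
    simp [ha]
  · simp [hij]

theorem uselessIn_iff {f : (ι → Bool) → Bool} {j k : ι} {b : Bool} :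
    UselessIn f j b k ↔ k ≠ j ∧ ∀ a : ι → Bool, a j = b → ∀ v, f (update a k v) = f a := by
  have restrict_update (a : ι → Bool) (hk : k ≠ j) (v : Bool) :
      update a k v ∘ Subtype.val = update (a ∘ Subtype.val) (⟨k, hk⟩ : {i // i ≠ j}) v :=
    update_comp_eq_of_injective a Subtype.val_injective ⟨k, hk⟩ v
  constructor
  · rintro ⟨hk, hindep⟩
    refine ⟨hk, fun a ha v => ?_⟩
    have hupd : update a k v j = b := by rw [update_of_ne hk.symm, ha]
    rw [← restrictBit_apply_comp_val f hupd, ← restrictBit_apply_comp_val f ha,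
      restrict_update a hk, not_boolDependsOn_iff.1 hindep]
  · rintro ⟨hk, hfree⟩
    refine ⟨hk, not_boolDependsOn_iff.2 fun y v => ?_⟩
    set a : ι → Bool := fun i => if h : i = j then b else y ⟨i, h⟩
    have ha : a j = b := dif_pos rfl
    have hy : a ∘ Subtype.val = y := funext fun i => dif_neg i.2
    have hupd : update a k v j = b := by rw [update_of_ne hk.symm, ha]
    rw [← hy, ← restrict_update a hk, restrictBit_apply_comp_val f hupd,
      restrictBit_apply_comp_val f ha, hfree a ha]

theorem UselessIn.trans {f : (ι → Bool) → Bool} {i k m : ι} {b c : Bool}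
    (hik : UselessIn f i b k) (hkm : UselessIn f k c m) (hmi : m ≠ i) :
    UselessIn f i b m := by
  obtain ⟨-, hfree_k⟩ := uselessIn_iff.1 hik
  obtain ⟨hmk, hfree_m⟩ := uselessIn_iff.1 hkm
  refine uselessIn_iff.2 ⟨hmi, fun a ha v => ?_⟩
  have ha_m : update a m v i = b := by rw [update_of_ne hmi.symm, ha]
  have ha_k : update a k c k = c := update_self ..
  calc f (update a m v)
      = f (update (update a m v) k c) := (hfree_k _ ha_m c).symm
    _ = f (update (update a k c) m v) := by rw [update_comm hmk]
    _ = f (update a k c) := hfree_m _ ha_k v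
    _ = f a := hfree_k a ha c

theorem useless_trans_path_general (n t : ℕ) (ht : 0 < t) (f : (Fin n → Bool) → Bool)
    (i : Fin n) (j : Fin t → Fin n) (b : Fin t → Bool)
    (hji : ∀ s : Fin t, j s ≠ i)
    (h0 : UselessIn f i (b ⟨0, ht⟩) (j ⟨0, ht⟩))
    (hstep : ∀ (s : ℕ) (hs : s + 1 < t),
      UselessIn f (j ⟨s, Nat.lt_of_succ_lt hs⟩) (b ⟨s + 1, hs⟩) (j ⟨s + 1, hs⟩)) :
    ∀ s : Fin t, UselessIn f i (b ⟨0, ht⟩) (j s) := by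
  rintro ⟨s, hs⟩
  induction s with
  | zero => exact h0
  | succ s ih => exact (ih (Nat.lt_of_succ_lt hs)).trans (hstep s hs) (hji _)

/-- Transitivity, path version: if `i, j 0, …, j (t-1)` are pairwise distinct,
`j 0 ∈ U(f_{i, b 0})` and `j (s+1) ∈ U(f_{j s, b (s+1)})` for all `s` with `s + 1 < t`,
then every `j s` belongs to `U(f_{i, b 0})`. -/
theorem useless_trans_path (n t : ℕ) (ht : 0 < t) (f : (Fin n → Bool) → Bool)
    (i : Fin n) (j : Fin t → Fin n) (b : Fin t → Bool)
    (hinj : Function.Injective j) (hji : ∀ s : Fin t, j s ≠ i)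
    (h0 : UselessIn f i (b ⟨0, ht⟩) (j ⟨0, ht⟩))
    (hstep : ∀ (s : ℕ) (hs : s + 1 < t),
      UselessIn f (j ⟨s, Nat.lt_of_succ_lt hs⟩) (b ⟨s + 1, hs⟩) (j ⟨s + 1, hs⟩)) :
    ∀ s : Fin t, UselessIn f i (b ⟨0, ht⟩) (j s) :=
  useless_trans_path_general n t ht f i j b hji h0 hstep
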